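/- If a finite tree T with p ≥ 2 vertices, q = p − 1 edges and bipartition (X, Y) admits a set-ordered odd-graceful labelling with respect to (X, Y), then T admits a set-ordered graceful labelling with respect to (X, Y). -/

import Mathlib

/-!
Across every edge the odd-graceful labels have opposite parity, so in the connected tree the
parity of a label is determined by the side of the bipartition: one parity on `X`, the other
on `Y`. Halving the labels, rounding down on `X` and up on `Y`, is then injective on each side,
keeps `X` below `Y`, and sends an edge label `2k - 1` to `k`.
-/

/-- The induced edge label `|f u - f v|` for a vertex labelling `f`. -/
def elabel {V : Type*} (f : V → ℕ) (u v : V) : ℕ :=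
  max (f u) (f v) - min (f u) (f v)

/-- `(X, Y)` is a bipartition of the graph `G`: the two parts cover all vertices,
are disjoint, and every edge joins a vertex of `X` to a vertex of `Y`. -/
def IsBipartitionOf {V : Type*} (G : SimpleGraph V) (X Y : Finset V) : Prop :=
  (∀ v : V, v ∈ X ∨ v ∈ Y) ∧ (∀ v : V, ¬(v ∈ X ∧ v ∈ Y)) ∧
    ∀ ⦃u v : V⦄, G.Adj u v → (u ∈ X ∧ v ∈ Y) ∨ (u ∈ Y ∧ v ∈ X)

/-- `f` is a set-ordered graceful labelling of `G` (with `q` edges) with respect to the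
bipartition `(X, Y)`: `f` is injective into `{0,…,q}`, the induced edge labels
`|f u - f v|` are pairwise distinct and form exactly `{1,…,q}`, and every label on `X`
is smaller than every label on `Y`. -/
def IsSetOrderedGraceful {V : Type*} (G : SimpleGraph V) (X Y : Finset V) (q : ℕ)
    (f : V → ℕ) : Prop :=
  Function.Injective f ∧ (∀ v : V, f v ≤ q) ∧
    (∀ u v u' v' : V, G.Adj u v → G.Adj u' v' →
      elabel f u v = elabel f u' v' → s(u, v) = s(u', v')) ∧
    (∀ u v : V, G.Adj u v → 1 ≤ elabel f u v ∧ elabel f u v ≤ q) ∧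
    (∀ m : ℕ, 1 ≤ m → m ≤ q → ∃ u v : V, G.Adj u v ∧ elabel f u v = m) ∧
    (∀ x ∈ X, ∀ y ∈ Y, f x < f y)

/-- `f` is a set-ordered odd-graceful labelling of `G` (with `q` edges) with respect to
the bipartition `(X, Y)`: `f` is injective into `{0,…,2q-1}`, the induced edge labels
`|f u - f v|` are pairwise distinct and form exactly the odd numbers `{1,3,…,2q-1}`,
and every label on `X` is smaller than every label on `Y`. -/
def IsSetOrderedOddGraceful {V : Type*} (G : SimpleGraph V) (X Y : Finset V) (q : ℕ)
    (f : V → ℕ) : Prop :=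
  Function.Injective f ∧ (∀ v : V, f v ≤ 2 * q - 1) ∧
    (∀ u v u' v' : V, G.Adj u v → G.Adj u' v' →
      elabel f u v = elabel f u' v' → s(u, v) = s(u', v')) ∧
    (∀ u v : V, G.Adj u v → Odd (elabel f u v) ∧ elabel f u v ≤ 2 * q - 1) ∧
    (∀ m : ℕ, Odd m → m ≤ 2 * q - 1 → ∃ u v : V, G.Adj u v ∧ elabel f u v = m) ∧
    (∀ x ∈ X, ∀ y ∈ Y, f x < f y)

section

variable {V : Type*}

section elabel

variable (f : V → ℕ) (u v : V)

lemma elabel_comm : elabel f u v = elabel f v u := by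
  rw [elabel, elabel, max_comm, min_comm]

variable {f u v}

lemma elabel_of_le (h : f u ≤ f v) : elabel f u v = f v - f u := by
  rw [elabel, max_eq_right h, min_eq_left h]

lemma odd_elabel_iff : Odd (elabel f u v) ↔ (Even (f u) ↔ ¬Even (f v)) := by
  rcases le_total (f u) (f v) with h | h
  · rw [elabel_of_le h, Nat.odd_sub' h, ← Nat.not_even_iff_odd]
    tauto
  · rw [elabel_comm, elabel_of_le h, Nat.odd_sub' h, ← Nat.not_even_iff_odd]
    tauto

end elabel

lemma SimpleGraph.Preconnected.eq_of_forall_adj_eq {β : Sort*} {G : SimpleGraph V}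
    (hG : G.Preconnected) {φ : V → β} (h : ∀ u v, G.Adj u v → φ u = φ v) (u v : V) :
    φ u = φ v := by
  obtain ⟨w⟩ := hG u v
  induction w with
  | nil => rfl
  | cons hadj _ ih => exact (h _ _ hadj).trans ih

namespace IsBipartitionOf

variable {G : SimpleGraph V} {X Y : Finset V} {u v : V}

lemma mem_right_iff (hbip : IsBipartitionOf G X Y) : v ∈ Y ↔ v ∉ X :=
  ⟨fun hY hX => hbip.2.1 v ⟨hX, hY⟩, (hbip.1 v).resolve_left⟩

lemma mem_left_iff_not_mem_left_of_adj (hbip : IsBipartitionOf G X Y) (h : G.Adj u v) :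
    u ∈ X ↔ v ∉ X := by
  rcases hbip.2.2 h with ⟨hu, hv⟩ | ⟨hu, hv⟩
  · simp [hu, hbip.mem_right_iff.1 hv]
  · simp [hv, hbip.mem_right_iff.1 hu]

lemma mem_iff_mem_iff_even_iff_even (hbip : IsBipartitionOf G X Y) (hG : G.Preconnected)
    {f : V → ℕ} (hodd : ∀ u v, G.Adj u v → Odd (elabel f u v)) (u v : V) :
    (u ∈ X ↔ v ∈ X) ↔ (Even (f u) ↔ Even (f v)) := by
  have hconst := hG.eq_of_forall_adj_eq (φ := fun w => (w ∈ X ↔ Even (f w))) (fun u v h => by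
    have hside := hbip.mem_left_iff_not_mem_left_of_adj h
    have hpar := odd_elabel_iff.1 (hodd u v h)
    exact propext (by tauto)) u v
  have := iff_of_eq hconst
  tauto

end IsBipartitionOf

section halfLabelling

variable [DecidableEq V]

def halfLabelling (X : Finset V) (f : V → ℕ) (v : V) : ℕ :=
  if v ∈ X then f v / 2 else (f v + 1) / 2

variable {G : SimpleGraph V} {X Y : Finset V} {f : V → ℕ} {u v : V}

lemma halfLabelling_of_mem (hv : v ∈ X) : halfLabelling X f v = f v / 2 := if_pos hv

lemma halfLabelling_of_not_mem (hv : v ∉ X) : halfLabelling X f v = (f v + 1) / 2 := if_neg hv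

lemma halfLabelling_le {q : ℕ} (h : f v ≤ 2 * q - 1) : halfLabelling X f v ≤ q := by
  unfold halfLabelling
  split_ifs <;> omega

lemma two_mul_halfLabelling_eq (hu : u ∈ X) (hv : v ∉ X) (hlt : f u < f v)
    (hpar : Even (f u) ↔ ¬Even (f v)) :
    2 * halfLabelling X f v = 2 * halfLabelling X f u + (f v - f u) + 1 := by
  rw [halfLabelling_of_mem hu, halfLabelling_of_not_mem hv]
  simp only [Nat.even_iff] at hpar
  omega

lemma eq_of_halfLabelling_eq (hside : u ∈ X ↔ v ∈ X) (hpar : Even (f u) ↔ Even (f v))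
    (heq : halfLabelling X f u = halfLabelling X f v) : f u = f v := by
  simp only [Nat.even_iff] at hpar
  by_cases hu : u ∈ X
  · rw [halfLabelling_of_mem hu, halfLabelling_of_mem (hside.1 hu)] at heq
    omega
  · rw [halfLabelling_of_not_mem hu, halfLabelling_of_not_mem (mt hside.2 hu)] at heq
    omega

lemma halfLabelling_left_lt_right (hbip : IsBipartitionOf G X Y)
    (hpar : ∀ u v, (u ∈ X ↔ v ∈ X) ↔ (Even (f u) ↔ Even (f v)))
    (hord : ∀ x ∈ X, ∀ y ∈ Y, f x < f y) (hu : u ∈ X) (hv : v ∈ Y) :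
    halfLabelling X f u < halfLabelling X f v := by
  have hv' := hbip.mem_right_iff.1 hv
  have := two_mul_halfLabelling_eq hu hv' (hord u hu v hv) (by have := hpar u v; tauto)
  omega

lemma halfLabelling_injective (hbip : IsBipartitionOf G X Y)
    (hpar : ∀ u v, (u ∈ X ↔ v ∈ X) ↔ (Even (f u) ↔ Even (f v)))
    (hord : ∀ x ∈ X, ∀ y ∈ Y, f x < f y) (hf : Function.Injective f) :
    Function.Injective (halfLabelling X f) := by
  intro u v heq
  by_cases hside : u ∈ X ↔ v ∈ X
  · exact hf (eq_of_halfLabelling_eq hside ((hpar u v).1 hside) heq)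
  · exfalso
    by_cases hu : u ∈ X
    · have hv : v ∈ Y := hbip.mem_right_iff.2 (by tauto)
      exact (halfLabelling_left_lt_right hbip hpar hord hu hv).ne heq
    · have hv : v ∈ X := by tauto
      have hu : u ∈ Y := hbip.mem_right_iff.2 hu
      exact (halfLabelling_left_lt_right hbip hpar hord hv hu).ne heq.symm

lemma elabel_halfLabelling (hbip : IsBipartitionOf G X Y)
    (hpar : ∀ u v, (u ∈ X ↔ v ∈ X) ↔ (Even (f u) ↔ Even (f v)))
    (hord : ∀ x ∈ X, ∀ y ∈ Y, f x < f y) (h : G.Adj u v) :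
    elabel f u v + 1 = 2 * elabel (halfLabelling X f) u v := by
  wlog hu : u ∈ X generalizing u v
  · rw [elabel_comm, elabel_comm (halfLabelling X f)]
    exact this h.symm ((hbip.mem_left_iff_not_mem_left_of_adj h.symm).2 hu)
  have hv : v ∉ X := (hbip.mem_left_iff_not_mem_left_of_adj h).1 hu
  have hflt := hord u hu v (hbip.mem_right_iff.2 hv)
  have htwo := two_mul_halfLabelling_eq hu hv hflt (by have := hpar u v; tauto)
  rw [elabel_of_le hflt.le, elabel_of_le (by omega : halfLabelling X f u ≤ halfLabelling X f v)]
  omega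

end halfLabelling

theorem IsSetOrderedOddGraceful.isSetOrderedGraceful_halfLabelling [DecidableEq V]
    {G : SimpleGraph V} {X Y : Finset V} {q : ℕ} {f : V → ℕ}
    (hf : IsSetOrderedOddGraceful G X Y q f) (hbip : IsBipartitionOf G X Y)
    (hG : G.Preconnected) : IsSetOrderedGraceful G X Y q (halfLabelling X f) := by
  obtain ⟨hinj, hle, hdistinct, hedge, hsurj, hord⟩ := hf
  have hpar := hbip.mem_iff_mem_iff_even_iff_even hG fun u v h => (hedge u v h).1
  have hel {u v : V} (h : G.Adj u v) := elabel_halfLabelling hbip hpar hord h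
  refine ⟨halfLabelling_injective hbip hpar hord hinj, fun v => halfLabelling_le (hle v),
    ?_, ?_, ?_, fun x hx y hy => halfLabelling_left_lt_right hbip hpar hord hx hy⟩
  · intro u v u' v' h h' heq
    have := hel h
    have := hel h'
    exact hdistinct u v u' v' h h' (by omega)
  · intro u v h
    have := hel h
    have := (hedge u v h).2
    constructor <;> omega
  · intro m hm hmq
    obtain ⟨u, v, h, he⟩ := hsurj (2 * m - 1) ⟨m - 1, by omega⟩ (by omega)
    have := hel h
    exact ⟨u, v, h, by omega⟩

end

theorem setOrderedOddGraceful_to_setOrderedGraceful_general {V : Type*} [DecidableEq V]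
    (G : SimpleGraph V) (hT : G.IsTree)
    (p : ℕ)
    (X Y : Finset V) (hbip : IsBipartitionOf G X Y)
    (f : V → ℕ) (hf : IsSetOrderedOddGraceful G X Y (p - 1) f) :
    ∃ g : V → ℕ, IsSetOrderedGraceful G X Y (p - 1) g :=
  ⟨halfLabelling X f, hf.isSetOrderedGraceful_halfLabelling hbip hT.connected.preconnected⟩

/-- A finite tree with `p ≥ 2` vertices and `q = p - 1` edges admitting a set-ordered
odd-graceful labelling with respect to a bipartition `(X, Y)` admits a set-ordered
graceful labelling with respect to `(X, Y)`. -/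
theorem setOrderedOddGraceful_to_setOrderedGraceful {V : Type*} [Fintype V] [DecidableEq V]
    (G : SimpleGraph V) (hT : G.IsTree)
    (p : ℕ) (hp : Fintype.card V = p) (hp2 : 2 ≤ p)
    (X Y : Finset V) (hbip : IsBipartitionOf G X Y)
    (f : V → ℕ) (hf : IsSetOrderedOddGraceful G X Y (p - 1) f) :
    ∃ g : V → ℕ, IsSetOrderedGraceful G X Y (p - 1) g :=
  setOrderedOddGraceful_to_setOrderedGraceful_general G hT p X Y hbip f hf
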